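/- Let $\mathcal{E}$ be an exact category and $E_1, E_2$ objects such that every morphism from an injective object to $E_1$ or to $E_2$ lies in the radical of $\mathcal{E}$. If $\phi\colon E_1 \oplus I_1 \to E_2 \oplus I_2$ is an isomorphism with $I_1, I_2$ injective, then the component maps $E_1 \to E_2$ and $I_1 \to I_2$ of $\phi$ are isomorphisms. -/
import Mathlib


open CategoryTheory Limits

universe v u

variable {E : Type u} [Category.{v} E] [Preadditive E] [HasBinaryBiproducts E]

/-- A (lightweight) exact structure on an additive category: a class of kernel-cokernel
pairs, called conflations. -/
structure ExactStruct (E : Type u) [Category.{v} E] [Preadditive E] where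
  /-- the class of conflations -/
  conflation : ∀ {A B C : E}, (A ⟶ B) → (B ⟶ C) → Prop
  comp_zero : ∀ {A B C : E} {i : A ⟶ B} {p : B ⟶ C}, conflation i p → i ≫ p = 0
  isKernel : ∀ {A B C : E} {i : A ⟶ B} {p : B ⟶ C} (h : conflation i p),
    Nonempty (IsLimit (KernelFork.ofι i (comp_zero h)))
  isCokernel : ∀ {A B C : E} {i : A ⟶ B} {p : B ⟶ C} (h : conflation i p),
    Nonempty (IsColimit (CokernelCofork.ofπ p (comp_zero h)))

/-- An inflation is the first map of a conflation. -/
def ExactStruct.IsInflation (S : ExactStruct E) {A B : E} (i : A ⟶ B) : Prop :=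
  ∃ (C : E) (p : B ⟶ C), S.conflation i p

/-- An object is injective (for the exact structure) if every morphism to it extends
along every inflation. -/
def ExactStruct.IsInj (S : ExactStruct E) (I : E) : Prop :=
  ∀ {A B : E} (i : A ⟶ B), S.IsInflation i → ∀ g : A ⟶ I, ∃ h : B ⟶ I, i ≫ h = g

/-- A morphism `g : A ⟶ B` lies in the radical if `𝟙 B - g' ≫ g` is invertible for
every `g' : B ⟶ A`. -/
def InRadical {A B : E} (g : A ⟶ B) : Prop :=
  ∀ g' : B ⟶ A, IsIso (𝟙 B - g' ≫ g)


lemma isIso_one_sub_swap {A B : E} (g : A ⟶ B) (g' : B ⟶ A)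
    (h : IsIso (𝟙 A - g ≫ g')) : IsIso (𝟙 B - g' ≫ g) := by
  set u := inv (𝟙 A - g ≫ g') with hu
  refine ⟨⟨𝟙 B + g' ≫ u ≫ g, ?_, ?_⟩⟩
  · have h1 : (𝟙 A - g ≫ g') ≫ u = 𝟙 A := IsIso.hom_inv_id _
    have h1' : u - (g ≫ g') ≫ u = 𝟙 A := by
      rw [← h1]; simp [Preadditive.sub_comp]
    calc (𝟙 B - g' ≫ g) ≫ (𝟙 B + g' ≫ u ≫ g)
        = 𝟙 B + g' ≫ (u - (𝟙 A + (g ≫ g') ≫ u)) ≫ g := by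
          simp only [Preadditive.sub_comp, Preadditive.comp_add, Preadditive.comp_sub,
            Preadditive.add_comp, Category.comp_id, Category.id_comp, Category.assoc]
          abel
      _ = 𝟙 B := by
          have : u - (𝟙 A + (g ≫ g') ≫ u) = 0 := by
            rw [← h1']; abel
          rw [this]; simp
  · have h1 : u ≫ (𝟙 A - g ≫ g') = 𝟙 A := IsIso.inv_hom_id _
    have h1' : u - u ≫ g ≫ g' = 𝟙 A := by
      rw [← h1]; simp [Preadditive.comp_sub]
    calc (𝟙 B + g' ≫ u ≫ g) ≫ (𝟙 B - g' ≫ g)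
        = 𝟙 B + g' ≫ (u - (𝟙 A + u ≫ g ≫ g')) ≫ g := by
          simp only [Preadditive.sub_comp, Preadditive.comp_add, Preadditive.comp_sub,
            Preadditive.add_comp, Category.comp_id, Category.id_comp, Category.assoc]
          abel
      _ = 𝟙 B := by
          have : u - (𝟙 A + u ≫ g ≫ g') = 0 := by rw [← h1']; abel
          rw [this]; simp

omit [Preadditive E] [HasBinaryBiproducts E] in
lemma isIso_of_comp_isIso {X Y : E} (f : X ⟶ Y) (r s : Y ⟶ X)
    (hfr : IsIso (f ≫ r)) (hsf : IsIso (s ≫ f)) : IsIso f := by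
  refine ⟨⟨r ≫ inv (f ≫ r), by simp [← Category.assoc], ?_⟩⟩
  have h1 : (inv (s ≫ f) ≫ s) ≫ f = 𝟙 Y := by simp
  have h2 : f ≫ r ≫ inv (f ≫ r) = 𝟙 X := by simp [← Category.assoc]
  calc (r ≫ inv (f ≫ r)) ≫ f = ((inv (s ≫ f) ≫ s) ≫ f) ≫ (r ≫ inv (f ≫ r)) ≫ f := by
        rw [h1]; simp
    _ = (inv (s ≫ f) ≫ s) ≫ (f ≫ r ≫ inv (f ≫ r)) ≫ f := by simp only [Category.assoc]
    _ = 𝟙 Y := by rw [h2]; simp [h1]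

/-- If every morphism from an injective object to `E₁` or `E₂` is in the
radical, and `φ : E₁ ⊞ I₁ ≅ E₂ ⊞ I₂` is an isomorphism with `I₁, I₂` injective, then the
component maps `E₁ ⟶ E₂` and `I₁ ⟶ I₂` of `φ` are isomorphisms. -/
theorem components_of_iso_with_max_injective_summands (S : ExactStruct E)
    {E₁ E₂ I₁ I₂ : E}
    (h₁ : ∀ (J : E), S.IsInj J → ∀ g : J ⟶ E₁, InRadical g)
    (h₂ : ∀ (J : E), S.IsInj J → ∀ g : J ⟶ E₂, InRadical g)
    (hI₁ : S.IsInj I₁) (hI₂ : S.IsInj I₂)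
    (φ : E₁ ⊞ I₁ ≅ E₂ ⊞ I₂) :
    IsIso (biprod.inl ≫ φ.hom ≫ biprod.fst : E₁ ⟶ E₂) ∧
    IsIso (biprod.inr ≫ φ.hom ≫ biprod.snd : I₁ ⟶ I₂) := by
  set a : E₁ ⟶ E₂ := biprod.inl ≫ φ.hom ≫ biprod.fst with ha
  set b : E₁ ⟶ I₂ := biprod.inl ≫ φ.hom ≫ biprod.snd with hb
  set c : I₁ ⟶ E₂ := biprod.inr ≫ φ.hom ≫ biprod.fst with hc
  set d : I₁ ⟶ I₂ := biprod.inr ≫ φ.hom ≫ biprod.snd with hd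
  set a' : E₂ ⟶ E₁ := biprod.inl ≫ φ.inv ≫ biprod.fst with ha'
  set b' : E₂ ⟶ I₁ := biprod.inl ≫ φ.inv ≫ biprod.snd with hb'
  set c' : I₂ ⟶ E₁ := biprod.inr ≫ φ.inv ≫ biprod.fst with hc'
  set d' : I₂ ⟶ I₁ := biprod.inr ≫ φ.inv ≫ biprod.snd with hd'
  have expand : ∀ {X Y : E} (f : X ⟶ E₁ ⊞ I₁) (g : E₂ ⊞ I₂ ⟶ Y),
      f ≫ (φ.hom ≫ φ.inv) ≫ (φ.hom ≫ g) =
      (f ≫ φ.hom ≫ biprod.fst) ≫ (biprod.inl ≫ φ.inv ≫ φ.hom ≫ g) +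
      (f ≫ φ.hom ≫ biprod.snd) ≫ (biprod.inr ≫ φ.inv ≫ φ.hom ≫ g) := by
    intro X Y f g
    conv_lhs => rw [show φ.hom ≫ φ.inv = φ.hom ≫ 𝟙 _ ≫ φ.inv by simp,
      ← biprod.total (X := E₂) (Y := I₂)]
    simp only [Preadditive.comp_add, Preadditive.add_comp, Category.assoc]
  have key₁ : a ≫ a' + b ≫ c' = 𝟙 E₁ := by
    have : biprod.inl ≫ (φ.hom ≫ φ.inv) ≫ biprod.fst = 𝟙 E₁ := by simp
    conv_rhs => rw [← this,
      show φ.hom ≫ φ.inv = φ.hom ≫ 𝟙 _ ≫ φ.inv by simp,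
      ← biprod.total (X := E₂) (Y := I₂)]
    simp only [Preadditive.comp_add, Preadditive.add_comp, Category.assoc,
      ha, hb, ha', hc']
  have key₂ : a' ≫ a + b' ≫ c = 𝟙 E₂ := by
    have : biprod.inl ≫ (φ.inv ≫ φ.hom) ≫ biprod.fst = 𝟙 E₂ := by simp
    conv_rhs => rw [← this,
      show φ.inv ≫ φ.hom = φ.inv ≫ 𝟙 _ ≫ φ.hom by simp,
      ← biprod.total (X := E₁) (Y := I₁)]
    simp only [Preadditive.comp_add, Preadditive.add_comp, Category.assoc,
      ha, hb, hc, ha', hb', hc']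
  have key₃ : c ≫ b' + d ≫ d' = 𝟙 I₁ := by
    have : biprod.inr ≫ (φ.hom ≫ φ.inv) ≫ biprod.snd = 𝟙 I₁ := by simp
    conv_rhs => rw [← this,
      show φ.hom ≫ φ.inv = φ.hom ≫ 𝟙 _ ≫ φ.inv by simp,
      ← biprod.total (X := E₂) (Y := I₂)]
    simp only [Preadditive.comp_add, Preadditive.add_comp, Category.assoc,
      hb', hc, hd, hd']
  have key₄ : c' ≫ b + d' ≫ d = 𝟙 I₂ := by
    have : biprod.inr ≫ (φ.inv ≫ φ.hom) ≫ biprod.snd = 𝟙 I₂ := by simp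
    conv_rhs => rw [← this,
      show φ.inv ≫ φ.hom = φ.inv ≫ 𝟙 _ ≫ φ.hom by simp,
      ← biprod.total (X := E₁) (Y := I₁)]
    simp only [Preadditive.comp_add, Preadditive.add_comp, Category.assoc,
      hb, hc', hd, hd']
  -- a ≫ a' is iso: a ≫ a' = 𝟙 E₁ - b ≫ c', and c' is radical
  have hiso₁ : IsIso (a ≫ a') := by
    have : a ≫ a' = 𝟙 E₁ - b ≫ c' := by rw [← key₁]; abel
    rw [this]
    exact h₁ I₂ hI₂ c' b
  have hiso₂ : IsIso (a' ≫ a) := by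
    have : a' ≫ a = 𝟙 E₂ - b' ≫ c := by rw [← key₂]; abel
    rw [this]
    exact h₂ I₁ hI₁ c b'
  have hiso₃ : IsIso (d ≫ d') := by
    have : d ≫ d' = 𝟙 I₁ - c ≫ b' := by rw [← key₃]; abel
    rw [this]
    exact isIso_one_sub_swap b' c (h₂ I₁ hI₁ c b')
  have hiso₄ : IsIso (d' ≫ d) := by
    have : d' ≫ d = 𝟙 I₂ - c' ≫ b := by rw [← key₄]; abel
    rw [this]
    exact isIso_one_sub_swap b c' (h₁ I₂ hI₂ c' b)
  exact ⟨isIso_of_comp_isIso a a' a' hiso₁ hiso₂, isIso_of_comp_isIso d d' d' hiso₃ hiso₄⟩
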